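/- Lower bound instance: for ρ = 1+√2, k ∈ ℕ, n = 2^k − 1, consider F(x) = a·x + ι{x ≥ 0} on ℝ with a = 1/(2(ρ^k − 1)), x_0 = 1. Then proximal GD with the silver stepsizes (which sum to ρ^k − 1) produces x_n = 1 − a(ρ^k − 1) = 1/2 and F(x_n) − F(x_*) = 1/(4ρ^k − 4). -/

import Mathlib

noncomputable def rho : ℝ := 1 + Real.sqrt 2

noncomputable def silver (t : ℕ) : ℝ := rho ^ ((padicValNat 2 (t + 1) : ℤ) - 1) + 1

lemma sqrt2_pos : (0:ℝ) < Real.sqrt 2 := Real.sqrt_pos.2 (by norm_num)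

lemma rho_gt_one : (1:ℝ) < rho := by unfold rho; linarith [sqrt2_pos]

lemma rho_pos : (0:ℝ) < rho := lt_trans one_pos rho_gt_one

lemma rho_sq : rho ^ 2 = 2 * rho + 1 := by
  unfold rho
  have h : Real.sqrt 2 ^ 2 = 2 := Real.sq_sqrt (by norm_num)
  ring_nf
  nlinarith [h]

lemma rho_inv : rho⁻¹ = rho - 2 := by
  have h : rho * (rho - 2) = 1 := by nlinarith [rho_sq]
  exact inv_eq_of_mul_eq_one_right h

lemma val2_add_pow {k i : ℕ} (hi : 0 < i) (hik : i < 2 ^ k) :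
    padicValNat 2 (2 ^ k + i) = padicValNat 2 i := by
  haveI : Fact (Nat.Prime 2) := ⟨Nat.prime_two⟩
  set v := padicValNat 2 i with hv
  have hdvd : (2:ℕ) ^ v ∣ i := pow_padicValNat_dvd
  have hvk : v < k := by
    have h1 : (2:ℕ) ^ v ≤ i := Nat.le_of_dvd hi hdvd
    exact (Nat.pow_lt_pow_iff_right (by norm_num)).1 (lt_of_le_of_lt h1 hik)
  have hne : 2 ^ k + i ≠ 0 := by positivity
  apply le_antisymm
  · -- padicValNat 2 (2^k+i) ≤ v : ¬ 2^(v+1) ∣ 2^k + i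
    by_contra h
    push_neg at h
    have h2 : (2:ℕ) ^ (v+1) ∣ 2 ^ k + i := (padicValNat_dvd_iff_le hne).2 h
    have h3 : (2:ℕ) ^ (v+1) ∣ 2 ^ k := pow_dvd_pow 2 hvk
    have h4 : (2:ℕ) ^ (v+1) ∣ i := (Nat.dvd_add_right h3).1 h2
    exact pow_succ_padicValNat_not_dvd hi.ne' h4
  · -- v ≤ val: 2^v ∣ 2^k + i
    have h3 : (2:ℕ) ^ v ∣ 2 ^ k := pow_dvd_pow 2 hvk.le
    exact (padicValNat_dvd_iff_le hne).1 (Nat.dvd_add h3 hdvd)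

noncomputable def g (m : ℕ) : ℝ := rho ^ ((padicValNat 2 m : ℤ) - 1) + 1

lemma g_pos (m : ℕ) : 0 < g m := by
  unfold g
  have := zpow_pos rho_pos ((padicValNat 2 m : ℤ) - 1)
  linarith

lemma sum_g (k : ℕ) : ∑ m ∈ Finset.Ico 1 (2 ^ k), g m = rho ^ k - 1 := by
  induction k with
  | zero => simp
  | succ k ih =>
    have h1 : (1:ℕ) ≤ 2 ^ k := Nat.one_le_two_pow
    have h2 : (2:ℕ) ^ k ≤ 2 ^ (k+1) := Nat.pow_le_pow_right (by norm_num) (by omega)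
    rw [← Finset.sum_Ico_consecutive g h1 h2, ih]
    have hsplit : ∑ m ∈ Finset.Ico (2^k) (2^(k+1)), g m
        = ∑ i ∈ Finset.range (2^k), g (2^k + i) := by
      rw [Finset.sum_Ico_eq_sum_range]
      have hcount : 2^(k+1) - 2^k = 2^k := by rw [pow_succ]; omega
      rw [hcount]
    have hrange : ∑ i ∈ Finset.range (2^k), g (2^k + i)
        = g (2^k) + ∑ i ∈ Finset.Ico 1 (2^k), g (2^k + i) := by
      rw [Finset.range_eq_Ico, ← Finset.sum_Ico_consecutive (fun i => g (2^k + i))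
        (Nat.zero_le 1) h1]
      simp
    have hshift : ∑ i ∈ Finset.Ico 1 (2^k), g (2^k + i)
        = ∑ i ∈ Finset.Ico 1 (2^k), g i := by
      apply Finset.sum_congr rfl
      intro i hi
      simp only [Finset.mem_Ico] at hi
      unfold g
      rw [val2_add_pow hi.1 hi.2]
    have hgk : g (2^k) = rho ^ ((k:ℤ) - 1) + 1 := by
      unfold g
      haveI : Fact (Nat.Prime 2) := ⟨Nat.prime_two⟩
      rw [padicValNat.prime_pow]
    rw [hsplit, hrange, hshift, ih, hgk]
    have hz : rho ^ ((k:ℤ) - 1) = rho ^ k * rho⁻¹ := by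
      rw [zpow_sub₀ (ne_of_gt rho_pos), zpow_one, zpow_natCast]
      ring
    rw [hz, rho_inv]
    have : rho ^ (k+1) = rho ^ k * rho := by ring
    nlinarith [rho_sq, pow_pos rho_pos k]

lemma sum_silver (k : ℕ) : ∑ t ∈ Finset.range (2 ^ k - 1), silver t = rho ^ k - 1 := by
  rw [← sum_g k]
  have h1 : (1:ℕ) ≤ 2 ^ k := Nat.one_le_two_pow
  rw [Finset.sum_Ico_eq_sum_range]
  apply Finset.sum_congr rfl
  intro i _
  unfold g silver
  rw [Nat.add_comm 1 i]

/-- lower bound instance. For k ≥ 1, n = 2^k − 1, a = 1/(2(ρ^k − 1)),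
F(x) = a·x + ι{x ≥ 0}, x_0 = 1, and proximal GD x_{t+1} = max(x_t − α_t a, 0) with the silver
stepsizes α_t, the final iterate satisfies x_n = 1 − a(ρ^k − 1) = 1/2 and
F(x_n) − F(x_*) = a·x_n − 0 = 1/(4ρ^k − 4) (x_* = 0 minimizes F with F(x_*) = 0). -/
theorem silver_lower_bound (k : ℕ) (hk : 1 ≤ k) (x : ℕ → ℝ)
    (hx0 : x 0 = 1)
    (hstep : ∀ t, x (t + 1) = max (x t - silver t * (1 / (2 * (rho ^ k - 1)))) 0) :
    x (2 ^ k - 1) = 1 - (1 / (2 * (rho ^ k - 1))) * (rho ^ k - 1) ∧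
    x (2 ^ k - 1) = 1 / 2 ∧
    (1 / (2 * (rho ^ k - 1))) * x (2 ^ k - 1) - 0 = 1 / (4 * rho ^ k - 4) := by
  set a : ℝ := 1 / (2 * (rho ^ k - 1)) with ha
  have hrk : (1:ℝ) < rho ^ k := by
    calc (1:ℝ) = 1 ^ k := (one_pow k).symm
    _ < rho ^ k := pow_lt_pow_left₀ rho_gt_one (by norm_num) (by omega)
  have hden : (0:ℝ) < rho ^ k - 1 := by linarith
  have hapos : 0 < a := by rw [ha]; positivity
  have hsilpos : ∀ t, 0 < silver t := by
    intro t
    unfold silver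
    have := zpow_pos rho_pos ((padicValNat 2 (t+1) : ℤ) - 1)
    linarith
  -- partial sums bounded by total
  have hpartial : ∀ n, n ≤ 2 ^ k - 1 → ∑ t ∈ Finset.range n, silver t ≤ rho ^ k - 1 := by
    intro n hn
    rw [← sum_silver k]
    apply Finset.sum_le_sum_of_subset_of_nonneg
    · exact Finset.range_subset_range.2 hn
    · intro t _ _; exact (hsilpos t).le
  have key : ∀ n, n ≤ 2 ^ k - 1 → x n = 1 - a * ∑ t ∈ Finset.range n, silver t := by
    intro n
    induction n with
    | zero => intro _; simp [hx0]
    | succ m ihm =>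
      intro hm
      have hm' : m ≤ 2 ^ k - 1 := by omega
      rw [hstep m, ihm hm', Finset.sum_range_succ]
      rw [max_eq_left]
      · ring
      have hb := hpartial (m+1) hm
      rw [Finset.sum_range_succ] at hb
      have hax : a * (∑ t ∈ Finset.range m, silver t + silver m) ≤ a * (rho ^ k - 1) :=
        mul_le_mul_of_nonneg_left hb hapos.le
      have haval : a * (rho ^ k - 1) = 1/2 := by
        rw [ha]; field_simp
      nlinarith
  have hxn : x (2 ^ k - 1) = 1 - a * (rho ^ k - 1) := by
    rw [key (2 ^ k - 1) le_rfl, sum_silver]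
  have hhalf : a * (rho ^ k - 1) = 1/2 := by rw [ha]; field_simp
  refine ⟨hxn, by rw [hxn, hhalf]; norm_num, ?_⟩
  rw [hxn, hhalf, ha]
  rw [div_mul_eq_mul_div, sub_zero, div_eq_div_iff (by linarith) (by linarith)]
  ring
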